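/- Fix η = 1/n for a positive integer n. The function g(x) = x / (∏_{i=1}^{2n} ((x+2)/η - i))^{η/2} = x / (∏_{i=1}^{2n} (n(x+2) - i))^{1/(2n)} is non-decreasing in x for x ranging over the positive integers. -/
import Mathlib

/-- Positivity of each factor. -/
lemma factor_pos (n : ℕ) (hn : 0 < n) (x : ℕ) (hx : 1 ≤ x) {i : ℕ}
    (hi : i ∈ Finset.Icc 1 (2 * n)) :
    (0 : ℝ) < (n : ℝ) * ((x : ℝ) + 2) - (i : ℝ) := by
  simp only [Finset.mem_Icc] at hi
  have h1 : (i : ℝ) ≤ 2 * n := by exact_mod_cast hi.2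
  have h2 : (1 : ℝ) ≤ (x : ℝ) := by exact_mod_cast hx
  have h3 : (1 : ℝ) ≤ (n : ℝ) := by exact_mod_cast hn
  nlinarith

/-- For `η = 1/n` with `n ∈ ℕ₊`, the function
`g(x) = x / (∏_{i=1}^{2n} (n(x+2) - i))^{1/(2n)}` is non-decreasing over positive integers. -/
theorem g_monotone (n : ℕ) (hn : 0 < n) :
    ∀ x y : ℕ, 1 ≤ x → x ≤ y →
      (x : ℝ) / (∏ i ∈ Finset.Icc 1 (2 * n), ((n : ℝ) * ((x : ℝ) + 2) - (i : ℝ))) ^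
          ((1 : ℝ) / (2 * n)) ≤
        (y : ℝ) / (∏ i ∈ Finset.Icc 1 (2 * n), ((n : ℝ) * ((y : ℝ) + 2) - (i : ℝ))) ^
          ((1 : ℝ) / (2 * n)) := by
  intro x y hx hxy
  have hy : 1 ≤ y := hx.trans hxy
  set Px : ℝ := ∏ i ∈ Finset.Icc 1 (2 * n), ((n : ℝ) * ((x : ℝ) + 2) - (i : ℝ)) with hPx
  set Py : ℝ := ∏ i ∈ Finset.Icc 1 (2 * n), ((n : ℝ) * ((y : ℝ) + 2) - (i : ℝ)) with hPy
  have hPxpos : 0 < Px := Finset.prod_pos fun i hi => factor_pos n hn x hx hi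
  have hPypos : 0 < Py := Finset.prod_pos fun i hi => factor_pos n hn y hy hi
  have hxR : (1 : ℝ) ≤ (x : ℝ) := by exact_mod_cast hx
  have hxyR : (x : ℝ) ≤ (y : ℝ) := by exact_mod_cast hxy
  have hcard : (Finset.Icc 1 (2 * n)).card = 2 * n := by simp
  -- key polynomial inequality
  have key : (x : ℝ) ^ (2 * n) * Py ≤ (y : ℝ) ^ (2 * n) * Px := by
    have h1 : (x : ℝ) ^ (2 * n) * Py
        = ∏ i ∈ Finset.Icc 1 (2 * n), ((x : ℝ) * ((n : ℝ) * ((y : ℝ) + 2) - (i : ℝ))) := by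
      rw [Finset.prod_mul_distrib, Finset.prod_const, hcard, hPy]
    have h2 : (y : ℝ) ^ (2 * n) * Px
        = ∏ i ∈ Finset.Icc 1 (2 * n), ((y : ℝ) * ((n : ℝ) * ((x : ℝ) + 2) - (i : ℝ))) := by
      rw [Finset.prod_mul_distrib, Finset.prod_const, hcard, hPx]
    rw [h1, h2]
    apply Finset.prod_le_prod
    · intro i hi
      exact mul_nonneg (by linarith) (factor_pos n hn y hy hi).le
    · intro i hi
      simp only [Finset.mem_Icc] at hi
      have hiR : (i : ℝ) ≤ 2 * n := by exact_mod_cast hi.2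
      nlinarith
  -- now compare after raising to power 2n
  have htwon : (0 : ℝ) < 2 * n := by positivity
  have hrpow : ∀ P : ℝ, 0 < P → (P ^ ((1 : ℝ) / (2 * n))) ^ (2 * n) = P := by
    intro P hP
    rw [← Real.rpow_natCast (P ^ ((1 : ℝ) / (2 * n))) (2 * n), ← Real.rpow_mul hP.le]
    push_cast
    rw [one_div, inv_mul_cancel₀ (by positivity), Real.rpow_one]
  have hbx : 0 < Px ^ ((1 : ℝ) / (2 * n)) := Real.rpow_pos_of_pos hPxpos _
  have hby : 0 < Py ^ ((1 : ℝ) / (2 * n)) := Real.rpow_pos_of_pos hPypos _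
  rw [div_le_div_iff₀ hbx hby]
  have h2n : 0 < 2 * n := by positivity
  have hpow : ((x : ℝ) * Py ^ ((1 : ℝ) / (2 * n))) ^ (2 * n)
      ≤ ((y : ℝ) * Px ^ ((1 : ℝ) / (2 * n))) ^ (2 * n) := by
    rw [mul_pow, mul_pow, hrpow Px hPxpos, hrpow Py hPypos]
    exact key
  exact le_of_pow_le_pow_left₀ h2n.ne' (by positivity) hpow
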